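/- arXiv:1910.06594 — 2 statements merged into one kernel-verified Lean document; each statement's English description precedes it below -/
import Mathlib

section
/- Let A > 0, D > 0, θ > 0, c ≥ 0, k > 0, h be real numbers with k ≥ h and k + cθ > 0, let T_a ≥ 0, and let W = (D/θ)·(exp(θ·T_a) − 1). Then the function g defined on (0, ∞) by g(T) = A/T + (D(k + cθ)/(θ²T))·(exp(θT) − θT − 1) − ((k − h)/(θ²T))·(D·(exp(θ·T_a) − θ·T_a − 1) + θ²·W·(T − T_a)) is strictly convex on (0, ∞). -/
/-!
On `(0, ∞)` we have `g T = a / T + C * (exp (θ T) - 1) / T + const` with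
`C = D (k + c θ) / θ² > 0` and `a = A + (k - h) / θ² * (θ² W T_a - D (exp (θ T_a) - θ T_a - 1))`.
Here `a ≥ A`, because `θ² W T_a = D u (exp u - 1)` for `u = θ T_a` and `exp u - u - 1 ≤ u (exp u - 1)`.
So `a / T` is convex, and `(exp (θ T) - 1) / T` is strictly convex: its second derivative is
`(exp u (u² - 2u + 2) - 2) / T³` with `u = θ T`, and
`exp u (u² - 2u + 2) ≥ (1 + u + u² / 2)(u² - 2u + 2) = 2 + u⁴ / 2`.
-/

open Real Set

theorem StrictConvexOn.const_mul {𝕜 E : Type*} [Field 𝕜] [LinearOrder 𝕜] [IsStrictOrderedRing 𝕜]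
    [AddCommMonoid E] [Module 𝕜 E] {s : Set E} {f : E → 𝕜} {c : 𝕜} (hc : 0 < c)
    (hf : StrictConvexOn 𝕜 s f) : StrictConvexOn 𝕜 s fun x => c * f x := by
  refine ⟨hf.1, fun x hx y hy hxy a b ha hb hab => ?_⟩
  have := mul_lt_mul_of_pos_left (hf.2 hx hy hxy ha hb hab) hc
  simp only [smul_eq_mul] at this ⊢
  linarith

theorem convexOn_const_div_Ioi {a : ℝ} (ha : 0 ≤ a) : ConvexOn ℝ (Ioi 0) fun x => a / x :=
  ((convexOn_zpow (-1)).smul ha).congr fun x _ => by simp [div_eq_mul_inv]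

theorem two_lt_exp_mul_sq_sub_two_mul_add_two {x : ℝ} (hx : 0 < x) :
    2 < exp x * (x ^ 2 - 2 * x + 2) := by
  have hq : 0 < x ^ 2 - 2 * x + 2 := by nlinarith [sq_nonneg (x - 1)]
  calc 2 < 2 + x ^ 4 / 2 := by have := pow_pos hx 4; linarith
    _ = (1 + x + x ^ 2 / 2) * (x ^ 2 - 2 * x + 2) := by ring
    _ ≤ exp x * (x ^ 2 - 2 * x + 2) :=
      mul_le_mul_of_nonneg_right (quadratic_le_exp_of_nonneg hx.le) hq.le

theorem exp_sub_sub_one_le_mul_exp_sub_one (u : ℝ) : exp u - u - 1 ≤ u * (exp u - 1) := by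
  have h := add_one_le_exp (-u)
  have : exp (-u) * exp u = 1 := by rw [← exp_add]; simp
  nlinarith [exp_pos u]

theorem hasDerivAt_exp_mul_sub_one_div (θ : ℝ) {x : ℝ} (hx : x ≠ 0) :
    HasDerivAt (fun y => (exp (θ * y) - 1) / y)
      ((θ * x * exp (θ * x) - exp (θ * x) + 1) / x ^ 2) x := by
  have h := (((hasDerivAt_id' x).const_mul θ).exp.sub_const 1).div (hasDerivAt_id' x) hx
  exact h.congr_deriv (by ring)

theorem hasDerivAt_deriv_exp_mul_sub_one_div (θ : ℝ) {x : ℝ} (hx : x ≠ 0) :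
    HasDerivAt (fun y => (θ * y * exp (θ * y) - exp (θ * y) + 1) / y ^ 2)
      ((exp (θ * x) * ((θ * x) ^ 2 - 2 * (θ * x) + 2) - 2) / x ^ 3) x := by
  have hnum : HasDerivAt (fun y => θ * y * exp (θ * y) - exp (θ * y) + 1)
      (θ ^ 2 * x * exp (θ * x)) x := by
    have hexp := ((hasDerivAt_id' x).const_mul θ).exp
    exact (((((hasDerivAt_id' x).const_mul θ).mul hexp).sub hexp).add_const 1).congr_deriv
      (by ring)
  exact (hnum.div (hasDerivAt_pow 2 x) (pow_ne_zero 2 hx)).congr_deriv (by field_simp; ring)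

theorem strictConvexOn_exp_mul_sub_one_div {θ : ℝ} (hθ : 0 < θ) :
    StrictConvexOn ℝ (Ioi 0) fun x => (exp (θ * x) - 1) / x := by
  have hderiv : EqOn (deriv fun y => (exp (θ * y) - 1) / y)
      (fun y => (θ * y * exp (θ * y) - exp (θ * y) + 1) / y ^ 2) (Ioi 0) := fun y hy =>
    (hasDerivAt_exp_mul_sub_one_div θ (ne_of_gt hy)).deriv
  refine strictConvexOn_of_deriv2_pos (convex_Ioi 0)
    (fun x hx => (hasDerivAt_exp_mul_sub_one_div θ (ne_of_gt hx)).continuousAt.continuousWithinAt)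
    fun x hx => ?_
  rw [interior_Ioi] at hx
  rw [Function.iterate_succ_apply, Function.iterate_one,
    (hderiv.eventuallyEq_of_mem (Ioi_mem_nhds hx)).deriv_eq,
    (hasDerivAt_deriv_exp_mul_sub_one_div θ (ne_of_gt hx)).deriv]
  have := two_lt_exp_mul_sq_sub_two_mul_add_two (mul_pos hθ hx)
  exact div_pos (by linarith) (pow_pos hx 3)

theorem cost_part_strictConvex_general (A D θ c k h Ta W : ℝ)
    (hA : 0 < A) (hD : 0 < D) (hθ : 0 < θ)
    (hkh : h ≤ k) (hkcθ : 0 < k + c * θ)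
    (hW : W = (D / θ) * (Real.exp (θ * Ta) - 1))
    (g : ℝ → ℝ)
    (hg : ∀ T : ℝ, g T = A / T
        + (D * (k + c * θ) / (θ ^ 2 * T)) * (Real.exp (θ * T) - θ * T - 1)
        - ((k - h) / (θ ^ 2 * T))
          * (D * (Real.exp (θ * Ta) - θ * Ta - 1) + θ ^ 2 * W * (T - Ta))) :
    StrictConvexOn ℝ (Set.Ioi (0 : ℝ)) g := by
  set a := A + (k - h) / θ ^ 2 * (θ ^ 2 * W * Ta - D * (exp (θ * Ta) - θ * Ta - 1)) with ha_def
  have ha : 0 ≤ a := by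
    have hslack : D * (exp (θ * Ta) - θ * Ta - 1) ≤ θ ^ 2 * W * Ta := by
      have hθW : θ ^ 2 * W * Ta = D * ((θ * Ta) * (exp (θ * Ta) - 1)) := by
        rw [hW]; field_simp
      rw [hθW]
      exact mul_le_mul_of_nonneg_left (exp_sub_sub_one_le_mul_exp_sub_one _) hD.le
    have hR : 0 ≤ (k - h) / θ ^ 2 := div_nonneg (sub_nonneg.2 hkh) (by positivity)
    exact add_nonneg hA.le (mul_nonneg hR (sub_nonneg.2 hslack))
  have hdecomp : EqOn (fun T => a / T + D * (k + c * θ) / θ ^ 2 * ((exp (θ * T) - 1) / T)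
      + (-(D * (k + c * θ) / θ) - (k - h) * W)) g (Ioi 0) := by
    intro T hT
    rw [hg, ha_def]
    field_simp [(mem_Ioi.1 hT).ne']
    ring
  have hC : 0 < D * (k + c * θ) / θ ^ 2 := by positivity
  exact (((convexOn_const_div_Ioi ha).add_strictConvexOn
    ((strictConvexOn_exp_mul_sub_one_div hθ).const_mul hC)).add_const _).congr hdecomp

theorem cost_part_strictConvex (A D θ c k h Ta W : ℝ)
    (hA : 0 < A) (hD : 0 < D) (hθ : 0 < θ) (hc : 0 ≤ c) (hk : 0 < k)
    (hkh : h ≤ k) (hkcθ : 0 < k + c * θ) (hTa : 0 ≤ Ta)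
    (hW : W = (D / θ) * (Real.exp (θ * Ta) - 1))
    (g : ℝ → ℝ)
    (hg : ∀ T : ℝ, g T = A / T
        + (D * (k + c * θ) / (θ ^ 2 * T)) * (Real.exp (θ * T) - θ * T - 1)
        - ((k - h) / (θ ^ 2 * T))
          * (D * (Real.exp (θ * Ta) - θ * Ta - 1) + θ ^ 2 * W * (T - Ta))) :
    StrictConvexOn ℝ (Set.Ioi (0 : ℝ)) g :=
  cost_part_strictConvex_general A D θ c k h Ta W hA hD hθ hkh hkcθ hW g hg
end

section
/- Let A > 0, D > 0, θ > 0, c ≥ 0, k > 0, h, s > 0, I_e > 0, M ≥ 0, N be real numbers with k ≥ h and k + cθ > 0, let T_a ≥ 0, and let W = (D/θ)·(exp(θ·T_a) − 1). Define TC₃ on (0, ∞) by TC₃(T) = A/T + (D(k + cθ)/(θ²T))·(exp(θT) − θT − 1) − ((k − h)/(θ²T))·(D·(exp(θ·T_a) − θ·T_a − 1) + θ²·W·(T − T_a)) − (1/(2T))·(s·D·I_e·(T² − N²) + (2·s·D·T + s·D·(T² − N²)·I_e)·I_e·(M − T)). Then TC₃ attains a global minimum on (0, ∞) at a unique point; that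 is, there exists a unique T* > 0 such that TC₃(T*) ≤ TC₃(T) for all T > 0. -/
/-!
On `T > 0`, `TC₃(T) = (K + B (exp (θT) - 1)) / T + Q + R T + S T²` with `B ≥ 0`, `S > 0` and
`K > 0`; the last inequality comes from `k ≥ h` and `exp y - y - 1 ≤ y (exp y - 1)` at `y = θ Tₐ`.
Since `exp y (y² - 2y + 2) ≥ 2` for `y ≥ 0`, the second derivative
`(2K + B (exp (θT) ((θT)² - 2θT + 2) - 2)) / T³ + 2S` is positive, so `TC₃` is strictly convex.
It tends to `+∞` both as `T → 0⁺` and as `T → ∞`, hence it has exactly one minimiser.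
-/
open Real Set Filter Topology

lemma exp_sub_sub_one_le_mul (y : ℝ) : exp y - y - 1 ≤ y * (exp y - 1) := by
  have h := add_one_le_exp (-y)
  have hinv : exp y * exp (-y) = 1 := by rw [← exp_add, add_neg_cancel, exp_zero]
  nlinarith [mul_le_mul_of_nonneg_left h (exp_pos y).le]

lemma two_le_exp_mul_sq_sub_two_mul_add_two {y : ℝ} (hy : 0 ≤ y) :
    2 ≤ exp y * (y ^ 2 - 2 * y + 2) := by
  have hq : 0 ≤ y ^ 2 - 2 * y + 2 := by nlinarith [sq_nonneg (y - 1)]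
  -- `(1 + y + y² / 2) (y² - 2y + 2) = 2 + y⁴ / 2`
  nlinarith [mul_le_mul_of_nonneg_right (quadratic_le_exp_of_nonneg hy) hq, sq_nonneg (y ^ 2)]

lemma strictConvexOn_of_hasDerivAt2_pos {D : Set ℝ} (hD : Convex ℝ D) (hDo : IsOpen D)
    {f f' f'' : ℝ → ℝ} (hf : ∀ x ∈ D, HasDerivAt f (f' x) x)
    (hf' : ∀ x ∈ D, HasDerivAt f' (f'' x) x) (hf'' : ∀ x ∈ D, 0 < f'' x) :
    StrictConvexOn ℝ D f := by
  have hmono : StrictMonoOn f' D :=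
    strictMonoOn_of_hasDerivWithinAt_pos hD (fun x hx ↦ (hf' x hx).continuousAt.continuousWithinAt)
      (fun x hx ↦ (hf' x (interior_subset hx)).hasDerivWithinAt)
      (fun x hx ↦ hf'' x (interior_subset hx))
  refine StrictMonoOn.strictConvexOn_of_deriv hD
    (fun x hx ↦ (hf x hx).continuousAt.continuousWithinAt) ?_
  rw [hDo.interior_eq]
  exact hmono.congr fun x hx ↦ (hf x hx).deriv.symm

lemma exists_forall_le_of_tendsto_nhdsGT_zero_of_tendsto_atTop {f : ℝ → ℝ}
    (hf : ContinuousOn f (Ioi 0)) (h0 : Tendsto f (𝓝[>] 0) atTop)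
    (hinf : Tendsto f atTop atTop) : ∃ x, 0 < x ∧ ∀ y, 0 < y → f x ≤ f y := by
  -- reparametrise by `exp` to use the extreme value theorem on all of `ℝ`
  have hc : Continuous (f ∘ exp) := hf.comp_continuous continuous_exp exp_pos
  obtain ⟨u, hu⟩ := hc.exists_forall_le <| by
    rw [cocompact_eq_atBot_atTop]
    exact (h0.comp tendsto_exp_atBot_nhdsGT).sup (hinf.comp tendsto_exp_atTop)
  exact ⟨exp u, exp_pos u, fun y hy ↦ by simpa [exp_log hy] using hu (log y)⟩

lemma existsUnique_forall_le_of_strictConvexOn_Ioi {f : ℝ → ℝ}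
    (hconv : StrictConvexOn ℝ (Ioi 0) f) (h0 : Tendsto f (𝓝[>] 0) atTop)
    (hinf : Tendsto f atTop atTop) : ∃! x, 0 < x ∧ ∀ y, 0 < y → f x ≤ f y := by
  obtain ⟨x, hx, hmin⟩ := exists_forall_le_of_tendsto_nhdsGT_zero_of_tendsto_atTop
    (hconv.convexOn.continuousOn isOpen_Ioi) h0 hinf
  exact ⟨x, ⟨hx, hmin⟩, fun y ⟨hy, hymin⟩ ↦ hconv.eq_of_isMinOn hymin hmin hy hx⟩

lemma existsUnique_forall_le_congr {f g : ℝ → ℝ} {s : Set ℝ} (h : EqOn f g s) :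
    (∃! x, x ∈ s ∧ ∀ y ∈ s, f x ≤ f y) ↔ ∃! x, x ∈ s ∧ ∀ y ∈ s, g x ≤ g y :=
  existsUnique_congr fun _ ↦ and_congr_right fun hx ↦
    forall₂_congr fun _ hy ↦ by rw [h hx, h hy]

noncomputable def cycleCost (K B θ Q R S T : ℝ) : ℝ :=
  (K + B * (exp (θ * T) - 1)) / T + (Q + R * T + S * T ^ 2)

namespace cycleCost

variable (K B θ Q R S : ℝ)

lemma hasDerivAt {x : ℝ} (hx : x ≠ 0) :
    HasDerivAt (cycleCost K B θ Q R S)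
      ((B * (exp (θ * x) * (θ * x - 1) + 1) - K) / x ^ 2 + (R + 2 * S * x)) x := by
  have hlin : HasDerivAt (fun T ↦ θ * T) θ x := by simpa using (hasDerivAt_id x).const_mul θ
  have hnum := ((hlin.exp.sub_const 1).const_mul B).const_add K
  have hquad := ((hasDerivAt_id x).const_mul R).const_add Q |>.add
    ((hasDerivAt_pow 2 x).const_mul S)
  refine ((hnum.div (hasDerivAt_id x) hx).add hquad).congr_deriv ?_
  simp only [id]
  field_simp
  ring

lemma hasDerivAt_deriv {x : ℝ} (hx : x ≠ 0) :
    HasDerivAt (fun T ↦ (B * (exp (θ * T) * (θ * T - 1) + 1) - K) / T ^ 2 + (R + 2 * S * T))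
      ((2 * K + B * (exp (θ * x) * ((θ * x) ^ 2 - 2 * (θ * x) + 2) - 2)) / x ^ 3 + 2 * S) x := by
  have hlin : HasDerivAt (fun T ↦ θ * T) θ x := by simpa using (hasDerivAt_id x).const_mul θ
  have hnum := (((hlin.exp.mul (hlin.sub_const 1)).add_const 1).const_mul B).sub_const K
  have hlin' := ((hasDerivAt_id x).const_mul (2 * S)).const_add R
  refine ((hnum.div (hasDerivAt_pow 2 x) (pow_ne_zero 2 hx)).add hlin').congr_deriv ?_
  simp only [Pi.mul_apply]
  field_simp
  ring

variable {K B θ Q R S}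

lemma strictConvexOn (hθ : 0 ≤ θ) (hB : 0 ≤ B) (hK : 0 < K) (hS : 0 < S) :
    StrictConvexOn ℝ (Ioi 0) (cycleCost K B θ Q R S) := by
  refine strictConvexOn_of_hasDerivAt2_pos (convex_Ioi 0) isOpen_Ioi
    (fun x hx ↦ hasDerivAt K B θ Q R S (ne_of_gt hx))
    (fun x hx ↦ hasDerivAt_deriv K B θ R S (ne_of_gt hx)) fun x (hx : 0 < x) ↦ ?_
  have := two_le_exp_mul_sq_sub_two_mul_add_two (mul_nonneg hθ hx.le)
  have : 0 ≤ B * (exp (θ * x) * ((θ * x) ^ 2 - 2 * (θ * x) + 2) - 2) :=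
    mul_nonneg hB (by linarith)
  positivity

lemma tendsto_nhdsGT_zero (hK : 0 < K) : Tendsto (cycleCost K B θ Q R S) (𝓝[>] 0) atTop := by
  have hnum : Tendsto (fun T ↦ K + B * (exp (θ * T) - 1)) (𝓝[>] 0) (𝓝 K) := by
    have : Continuous fun T ↦ K + B * (exp (θ * T) - 1) := by fun_prop
    simpa using (this.tendsto 0).mono_left nhdsWithin_le_nhds
  have hquad : Tendsto (fun T ↦ Q + R * T + S * T ^ 2) (𝓝[>] 0) (𝓝 Q) := by
    have : Continuous fun T : ℝ ↦ Q + R * T + S * T ^ 2 := by fun_prop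
    simpa using (this.tendsto 0).mono_left nhdsWithin_le_nhds
  exact ((hnum.pos_mul_atTop hK tendsto_inv_nhdsGT_zero).atTop_add hquad).congr fun T ↦ by
    rw [cycleCost, div_eq_mul_inv]

lemma tendsto_atTop (hB : 0 ≤ B) (hS : 0 < S) :
    Tendsto (cycleCost K B θ Q R S) atTop atTop := by
  have hlower : Tendsto (fun T ↦ ((K - B) * T⁻¹ + Q) + T * (R + S * T)) atTop atTop :=
    ((tendsto_inv_atTop_zero.const_mul (K - B)).add_const Q).add_atTop <|
      tendsto_id.atTop_mul_atTop₀ (tendsto_atTop_add_const_left _ R (tendsto_id.const_mul_atTop hS))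
  refine tendsto_atTop_mono' _ ?_ hlower
  filter_upwards [eventually_gt_atTop 0] with T hT
  have : (K - B) / T ≤ (K + B * (exp (θ * T) - 1)) / T := by
    gcongr
    nlinarith [exp_pos (θ * T)]
  rw [cycleCost, ← div_eq_mul_inv]
  linarith [show T * (R + S * T) = R * T + S * T ^ 2 by ring]

end cycleCost

theorem TC3_unique_min_general (A D θ c k h s Ie M N Ta W : ℝ)
    (hA : 0 < A) (hD : 0 < D) (hθ : 0 < θ)
    (hs : 0 < s) (hIe : 0 < Ie) (hM : 0 ≤ M)
    (hkh : h ≤ k) (hkcθ : 0 < k + c * θ)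
    (hW : W = (D / θ) * (Real.exp (θ * Ta) - 1))
    (TC3 : ℝ → ℝ)
    (hTC3 : ∀ T : ℝ, TC3 T = A / T
        + (D * (k + c * θ) / (θ ^ 2 * T)) * (Real.exp (θ * T) - θ * T - 1)
        - ((k - h) / (θ ^ 2 * T))
          * (D * (Real.exp (θ * Ta) - θ * Ta - 1) + θ ^ 2 * W * (T - Ta))
        - (1 / (2 * T)) * (s * D * Ie * (T ^ 2 - N ^ 2)
            + (2 * s * D * T + s * D * (T ^ 2 - N ^ 2) * Ie) * Ie * (M - T))) :
    ∃! Tstar : ℝ, 0 < Tstar ∧ ∀ T : ℝ, 0 < T → TC3 Tstar ≤ TC3 T := by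
  have hstock : D * (exp (θ * Ta) - θ * Ta - 1) ≤ θ ^ 2 * W * Ta :=
    calc D * (exp (θ * Ta) - θ * Ta - 1) ≤ D * (θ * Ta * (exp (θ * Ta) - 1)) := by
          gcongr; exact exp_sub_sub_one_le_mul (θ * Ta)
      _ = θ ^ 2 * W * Ta := by rw [hW]; field_simp
  set K := A + s * D * Ie * N ^ 2 / 2 + s * D * Ie ^ 2 * M * N ^ 2 / 2
    + (k - h) * (θ ^ 2 * W * Ta - D * (exp (θ * Ta) - θ * Ta - 1)) / θ ^ 2 with hK
  have hKpos : 0 < K := by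
    have := sub_nonneg.2 hkh
    have := sub_nonneg.2 hstock
    positivity
  have hform : EqOn TC3 (cycleCost K (D * (k + c * θ) / θ ^ 2) θ
      (-(D * (k + c * θ) / θ) - (k - h) * W - s * D * Ie * M - s * D * Ie ^ 2 * N ^ 2 / 2)
      (s * D * Ie / 2 - s * D * Ie ^ 2 * M / 2) (s * D * Ie ^ 2 / 2)) (Ioi 0) :=
    fun T (hT : 0 < T) ↦ by
      rw [hTC3, cycleCost, hK]
      field_simp
      ring
  refine (existsUnique_forall_le_congr hform).2
    (existsUnique_forall_le_of_strictConvexOn_Ioi ?_ (cycleCost.tendsto_nhdsGT_zero hKpos)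
      (cycleCost.tendsto_atTop (by positivity) (by positivity)))
  exact cycleCost.strictConvexOn hθ.le (by positivity) hKpos (by positivity)

theorem TC3_unique_min (A D θ c k h s Ie M N Ta W : ℝ)
    (hA : 0 < A) (hD : 0 < D) (hθ : 0 < θ) (hc : 0 ≤ c) (hk : 0 < k)
    (hs : 0 < s) (hIe : 0 < Ie) (hM : 0 ≤ M)
    (hkh : h ≤ k) (hkcθ : 0 < k + c * θ) (hTa : 0 ≤ Ta)
    (hW : W = (D / θ) * (Real.exp (θ * Ta) - 1))
    (TC3 : ℝ → ℝ)
    (hTC3 : ∀ T : ℝ, TC3 T = A / T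
        + (D * (k + c * θ) / (θ ^ 2 * T)) * (Real.exp (θ * T) - θ * T - 1)
        - ((k - h) / (θ ^ 2 * T))
          * (D * (Real.exp (θ * Ta) - θ * Ta - 1) + θ ^ 2 * W * (T - Ta))
        - (1 / (2 * T)) * (s * D * Ie * (T ^ 2 - N ^ 2)
            + (2 * s * D * T + s * D * (T ^ 2 - N ^ 2) * Ie) * Ie * (M - T))) :
    ∃! Tstar : ℝ, 0 < Tstar ∧ ∀ T : ℝ, 0 < T → TC3 Tstar ≤ TC3 T :=
  TC3_unique_min_general A D θ c k h s Ie M N Ta W hA hD hθ hs hIe hM hkh hkcθ hW TC3 hTC3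
end
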